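/- arXiv:1812.05333 — 2 statements merged into one kernel-verified Lean document; each statement's English description precedes it below -/
import Mathlib

section
/- Let R₁ = (1/N)·C⁺(N/M + P·K·h₁·β₁ / (M·(β₁ϖ₁ + β₂ϖ₂) + P·K·h₂·β₂)) and R₂ = (1/N)·C⁺(N/M + P·K·h₂·β₂ / (M·(β₁ϖ₁ + β₂ϖ₂))), with all parameters positive. If β₁/β₂ = (√((Υϖ₂+ϖ₁)² + 4P(K/M)h₁ϖ₁) + ϖ₁ − Υϖ₂)/(2Υϖ₁) where Υ = h₁/h₂, then R₁ = R₂. -/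
noncomputable def Cplus (x : ℝ) : ℝ := max ((1/2) * Real.logb 2 x) 0

/-- under the quadratic-formula power allocation, the two sub-function
rates in a sub-carrier are equal. -/
theorem rates_equal (N M K P h₁ h₂ β₁ β₂ ϖ₁ ϖ₂ : ℝ)
    (hN : 0 < N) (hM : 0 < M) (hK : 0 < K) (hP : 0 < P)
    (hh1 : 0 < h₁) (hh2 : 0 < h₂) (hb1 : 0 < β₁) (hb2 : 0 < β₂)
    (hw1 : 0 < ϖ₁) (hw2 : 0 < ϖ₂)
    (hrel : β₁ / β₂ =
      (Real.sqrt (((h₁ / h₂) * ϖ₂ + ϖ₁)^2 + 4 * P * (K / M) * h₁ * ϖ₁)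
        + ϖ₁ - (h₁ / h₂) * ϖ₂) / (2 * (h₁ / h₂) * ϖ₁)) :
    (1 / N) * Cplus (N / M + P * K * h₁ * β₁ /
        (M * (β₁ * ϖ₁ + β₂ * ϖ₂) + P * K * h₂ * β₂))
      = (1 / N) * Cplus (N / M + P * K * h₂ * β₂ / (M * (β₁ * ϖ₁ + β₂ * ϖ₂))) := by
  set U : ℝ := h₁ / h₂ with hUdef
  have hU : 0 < U := div_pos hh1 hh2
  set s : ℝ := Real.sqrt ((U * ϖ₂ + ϖ₁)^2 + 4 * P * (K / M) * h₁ * ϖ₁) with hsdef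
  have hDpos : 0 < (U * ϖ₂ + ϖ₁)^2 + 4 * P * (K / M) * h₁ * ϖ₁ := by positivity
  have hs2 : s ^ 2 = (U * ϖ₂ + ϖ₁)^2 + 4 * P * (K / M) * h₁ * ϖ₁ :=
    Real.sq_sqrt hDpos.le
  have e1 : 2 * U * ϖ₁ * β₁ = (s + ϖ₁ - U * ϖ₂) * β₂ := by
    have hden : (2 * U * ϖ₁ : ℝ) ≠ 0 := by positivity
    have := (div_eq_div_iff hb2.ne' hden).mp hrel
    linarith
  have e2 : M * s ^ 2 = M * (U * ϖ₂ + ϖ₁)^2 + 4 * P * K * h₁ * ϖ₁ := by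
    rw [hs2]; field_simp
  have e3 : U * h₂ = h₁ := by
    rw [hUdef]; field_simp
  have hA : 0 < M * (β₁ * ϖ₁ + β₂ * ϖ₂) := by positivity
  have hB : 0 < M * (β₁ * ϖ₁ + β₂ * ϖ₂) + P * K * h₂ * β₂ := by positivity
  have key : P * K * h₁ * β₁ / (M * (β₁ * ϖ₁ + β₂ * ϖ₂) + P * K * h₂ * β₂)
      = P * K * h₂ * β₂ / (M * (β₁ * ϖ₁ + β₂ * ϖ₂)) := by
    rw [div_eq_div_iff hB.ne' hA.ne']
    have hc : (4 * U * ϖ₁ ^ 2 : ℝ) ≠ 0 := by positivity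
    apply mul_left_cancel₀ hc
    linear_combination
      P * K * h₂ * ϖ₁ * β₂ ^ 2 * e2 +
      P * K * h₂ * M * ϖ₁ * (2 * β₂ * s + (2 * U * ϖ₁ * β₁ - (s + ϖ₁ - U * ϖ₂) * β₂)) * e1 -
      P * K * (4 * U * ϖ₁ ^ 2 * M * (β₁ * ϖ₁ + β₂ * ϖ₂) * β₁
        + 4 * P * K * ϖ₁ ^ 2 * β₂ ^ 2 * h₂) * e3
  rw [key]
end

section
/- The expression R(P) = 2r·C⁺(N/(rK) + 2P·ξ_{1−r}·ξ_{1−2r} / (r·Δ + √((r·Δ)² + 4r·ϖ₁·P·ξ_{1−r}·ξ_{1−2r}²))), with all constants positive, is monotonically non-decreasing in P for P > 0. -/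
lemma Cplus_mono {x y : ℝ} (hx : 0 < x) (hxy : x ≤ y) : Cplus x ≤ Cplus y := by
  unfold Cplus
  have h := Real.logb_le_logb_of_le (b := 2) (by norm_num) hx hxy
  have h2 : (1/2 : ℝ) * Real.logb 2 x ≤ (1/2) * Real.logb 2 y := by linarith
  exact max_le_max h2 le_rfl

/-- the limiting rate R(P) is monotonically non-decreasing in P for P > 0. -/
theorem limiting_rate_mono (r N K ϖ₁ Δ ξ₁ ξ₂ : ℝ)
    (hr : 0 < r) (hN : 0 < N) (hK : 0 < K) (hw1 : 0 < ϖ₁) (hΔ : 0 < Δ)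
    (hξ1 : 0 < ξ₁) (hξ2 : 0 < ξ₂) :
    ∀ P Q : ℝ, 0 < P → P ≤ Q →
      2 * r * Cplus (N / (r * K) + 2 * P * ξ₁ * ξ₂ /
          (r * Δ + Real.sqrt ((r * Δ)^2 + 4 * r * ϖ₁ * P * ξ₁ * ξ₂^2)))
        ≤ 2 * r * Cplus (N / (r * K) + 2 * Q * ξ₁ * ξ₂ /
          (r * Δ + Real.sqrt ((r * Δ)^2 + 4 * r * ϖ₁ * Q * ξ₁ * ξ₂^2))) := by
  intro P Q hP hPQ
  have hQ : 0 < Q := lt_of_lt_of_le hP hPQ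
  have haP : 0 < r * Δ := mul_pos hr hΔ
  -- rationalization identity
  have key : ∀ X : ℝ, 0 < X →
      2 * X * ξ₁ * ξ₂ / (r * Δ + Real.sqrt ((r * Δ)^2 + 4 * r * ϖ₁ * X * ξ₁ * ξ₂^2))
        = (Real.sqrt ((r * Δ)^2 + 4 * r * ϖ₁ * X * ξ₁ * ξ₂^2) - r * Δ)
            / (2 * r * ϖ₁ * ξ₂) := by
    intro X hX
    have hs2 : (Real.sqrt ((r * Δ)^2 + 4 * r * ϖ₁ * X * ξ₁ * ξ₂^2))^2
        = (r * Δ)^2 + 4 * r * ϖ₁ * X * ξ₁ * ξ₂^2 := Real.sq_sqrt (by positivity)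
    have hsn : 0 ≤ Real.sqrt ((r * Δ)^2 + 4 * r * ϖ₁ * X * ξ₁ * ξ₂^2) :=
      Real.sqrt_nonneg _
    have hden : 0 < r * Δ + Real.sqrt ((r * Δ)^2 + 4 * r * ϖ₁ * X * ξ₁ * ξ₂^2) := by
      linarith
    rw [div_eq_div_iff (ne_of_gt hden) (by positivity)]
    nlinarith [hs2]
  have hsqrt_le : Real.sqrt ((r * Δ)^2 + 4 * r * ϖ₁ * P * ξ₁ * ξ₂^2)
      ≤ Real.sqrt ((r * Δ)^2 + 4 * r * ϖ₁ * Q * ξ₁ * ξ₂^2) := by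
    apply Real.sqrt_le_sqrt
    nlinarith [mul_pos (mul_pos (mul_pos (mul_pos hr hw1) hP) hξ1) (pow_pos hξ2 2)]
  have hsqrt_ge : r * Δ ≤ Real.sqrt ((r * Δ)^2 + 4 * r * ϖ₁ * P * ξ₁ * ξ₂^2) := by
    have hpos4 : 0 ≤ 4 * r * ϖ₁ * P * ξ₁ * ξ₂^2 := by positivity
    have h4 : (r*Δ)^2 ≤ (r * Δ)^2 + 4 * r * ϖ₁ * P * ξ₁ * ξ₂^2 := by linarith
    calc r * Δ = Real.sqrt ((r*Δ)^2) := (Real.sqrt_sq haP.le).symm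
      _ ≤ _ := Real.sqrt_le_sqrt h4
  have hfrac : 2 * P * ξ₁ * ξ₂ /
          (r * Δ + Real.sqrt ((r * Δ)^2 + 4 * r * ϖ₁ * P * ξ₁ * ξ₂^2))
        ≤ 2 * Q * ξ₁ * ξ₂ /
          (r * Δ + Real.sqrt ((r * Δ)^2 + 4 * r * ϖ₁ * Q * ξ₁ * ξ₂^2)) := by
    rw [key P hP, key Q hQ]
    gcongr
  have hxpos : 0 < N / (r * K) + 2 * P * ξ₁ * ξ₂ /
      (r * Δ + Real.sqrt ((r * Δ)^2 + 4 * r * ϖ₁ * P * ξ₁ * ξ₂^2)) := by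
    have h1 : 0 < N / (r * K) := by positivity
    have h2 : 0 ≤ 2 * P * ξ₁ * ξ₂ /
        (r * Δ + Real.sqrt ((r * Δ)^2 + 4 * r * ϖ₁ * P * ξ₁ * ξ₂^2)) := by
      apply div_nonneg (by positivity)
      linarith [Real.sqrt_nonneg ((r * Δ)^2 + 4 * r * ϖ₁ * P * ξ₁ * ξ₂^2)]
    linarith
  have hle : N / (r * K) + 2 * P * ξ₁ * ξ₂ /
      (r * Δ + Real.sqrt ((r * Δ)^2 + 4 * r * ϖ₁ * P * ξ₁ * ξ₂^2))
      ≤ N / (r * K) + 2 * Q * ξ₁ * ξ₂ /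
      (r * Δ + Real.sqrt ((r * Δ)^2 + 4 * r * ϖ₁ * Q * ξ₁ * ξ₂^2)) := by linarith
  have h := Cplus_mono hxpos hle
  have h2r : (0:ℝ) ≤ 2 * r := by linarith
  exact mul_le_mul_of_nonneg_left h h2r
end
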